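/- Promoting the dKP nonlinear Lax pair to a contact Lax pair forces z-independence: let u, v : ℝ⁴ → ℝ be continuously differentiable functions of (x, y, z, t), and define f(x,y,z,t,p) = p² + u and g(x,y,z,t,p) = p³ + (3/2)·u·p + v. Then ∂_t f − ∂_y g + {f, g}_L = 0 holds for all (x, y, z, t, p) ∈ ℝ⁵ (bracket in the variables (x, z, p)) if and only if at every (x, y, z, t): u_z = 0, v_z = 0, 4v_x = 3u_y, and 2u_t = 3u·u_x + 2v_y. -/

import Mathlib

/-- Partial derivative of a function on ℝ⁵ in the `i`-th coordinate.
Coordinates: `0 ↦ x`, `1 ↦ y`, `2 ↦ z`, `3 ↦ t`, `4 ↦ p`. -/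
noncomputable def pd5 (i : Fin 5) (h : (Fin 5 → ℝ) → ℝ) (r : Fin 5 → ℝ) : ℝ :=
  fderiv ℝ h r (Pi.single i 1)

/-- Partial derivative of a function on ℝ⁴ in the `i`-th coordinate.
Coordinates: `0 ↦ x`, `1 ↦ y`, `2 ↦ z`, `3 ↦ t`. -/
noncomputable def pd4 (i : Fin 4) (h : (Fin 4 → ℝ) → ℝ) (w : Fin 4 → ℝ) : ℝ :=
  fderiv ℝ h w (Pi.single i 1)

/-- The contact (Lagrange) bracket in the variables `(x, z, p) = (r 0, r 2, r 4)`,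
with `(y, t) = (r 1, r 3)` as parameters. -/
noncomputable def cbr5 (h₁ h₂ : (Fin 5 → ℝ) → ℝ) (r : Fin 5 → ℝ) : ℝ :=
  pd5 4 h₁ r * pd5 0 h₂ r - pd5 4 h₂ r * pd5 0 h₁ r
    - r 4 * (pd5 4 h₁ r * pd5 2 h₂ r - pd5 4 h₂ r * pd5 2 h₁ r)
    + h₁ r * pd5 2 h₂ r - h₂ r * pd5 2 h₁ r

/-- Action of the contact vector field `X_h` in the variables `(x, z, p) = (r 0, r 2, r 4)`,
pointwise in the parameters `(y, t) = (r 1, r 3)`: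
`X_h(φ) = hₚ φₓ + (p h_z − hₓ) φₚ + (h − p hₚ) φ_z`. -/
noncomputable def X5 (h φ : (Fin 5 → ℝ) → ℝ) (r : Fin 5 → ℝ) : ℝ :=
  pd5 4 h r * pd5 0 φ r + (r 4 * pd5 2 h r - pd5 0 h r) * pd5 4 φ r
    + (h r - r 4 * pd5 4 h r) * pd5 2 φ r

/-- Projection `(x,y,z,t,p) ↦ (x,y,z,t)`. -/
def proj45 (r : Fin 5 → ℝ) : Fin 4 → ℝ := fun i => r i.castSucc

/-!
Every partial derivative of `f = p² + u` and `g = p³ + (3/2) u p + v` is explicit, so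
`∂_t f − ∂_y g + {f, g}_L` is a cubic polynomial in `p` with coefficients `u_z / 2`, `−v_z`,
`2 v_x − (3/2) u_y + (3/2) u u_z` and `u_t − v_y − (3/2) u u_x + u v_z − v u_z`, all evaluated
at `(x, y, z, t)`. It vanishes for every `p` iff these four coefficients do, and that system is
equivalent to `u_z = v_z = 0`, `4 v_x = 3 u_y`, `2 u_t = 3 u u_x + 2 v_y`.
-/

section PartialDerivatives

variable {h k : (Fin 5 → ℝ) → ℝ} {r : Fin 5 → ℝ} (i : Fin 5)

lemma pd5_add (hh : DifferentiableAt ℝ h r) (hk : DifferentiableAt ℝ k r) :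
    pd5 i (fun r => h r + k r) r = pd5 i h r + pd5 i k r := by
  simp only [pd5, fderiv_fun_add hh hk, add_apply]

lemma pd5_mul (hh : DifferentiableAt ℝ h r) (hk : DifferentiableAt ℝ k r) :
    pd5 i (fun r => h r * k r) r = h r * pd5 i k r + k r * pd5 i h r := by
  simp only [pd5, fderiv_fun_mul hh hk, add_apply, smul_apply, smul_eq_mul]

lemma pd5_const_mul (hh : DifferentiableAt ℝ h r) (c : ℝ) :
    pd5 i (fun r => c * h r) r = c * pd5 i h r := by
  simp only [pd5, fderiv_const_mul hh, smul_apply, smul_eq_mul]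

lemma pd5_pow (hh : DifferentiableAt ℝ h r) (n : ℕ) :
    pd5 i (fun r => h r ^ n) r = n * h r ^ (n - 1) * pd5 i h r := by
  simp only [pd5, ← Pi.pow_def, fderiv_pow n hh, smul_apply, nsmul_eq_mul, smul_eq_mul]

lemma pd5_apply (j : Fin 5) : pd5 i (fun r => r j) r = (Pi.single i 1 : Fin 5 → ℝ) j :=
  congrArg (· (Pi.single i 1))
    (ContinuousLinearMap.proj (R := ℝ) (φ := fun _ : Fin 5 => ℝ) j).fderiv

lemma pd5_castSucc_apply_last (i : Fin 4) : pd5 i.castSucc (fun r => r 4) r = 0 := by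
  rw [pd5_apply]
  exact Pi.single_eq_of_ne (Fin.castSucc_ne_last i).symm _

lemma pd5_last_apply_last : pd5 (Fin.last 4) (fun r => r 4) r = 1 := by
  rw [pd5_apply]
  exact Pi.single_eq_same _ _

end PartialDerivatives

section Lift

def proj45L : (Fin 5 → ℝ) →L[ℝ] (Fin 4 → ℝ) :=
  ContinuousLinearMap.pi fun i => ContinuousLinearMap.proj i.castSucc

@[fun_prop]
lemma differentiable_proj45 : Differentiable ℝ proj45 := proj45L.differentiable

lemma proj45_single_castSucc (i : Fin 4) (a : ℝ) :
    proj45 (Pi.single i.castSucc a) = Pi.single i a := by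
  funext j
  simp [proj45, Pi.single_apply, Fin.castSucc_inj]

lemma proj45_single_last (a : ℝ) : proj45 (Pi.single (Fin.last 4) a) = 0 := by
  funext j
  simp [proj45, Pi.single_apply, Fin.ext_iff]
  omega

lemma proj45_snoc (s : Fin 4 → ℝ) (p : ℝ) : proj45 (Fin.snoc s p) = s := by
  funext j
  simp [proj45]

variable {u : (Fin 4 → ℝ) → ℝ} {r : Fin 5 → ℝ}

lemma pd5_comp_proj45 (hu : DifferentiableAt ℝ u (proj45 r)) (i : Fin 5) :
    pd5 i (fun r => u (proj45 r)) r = fderiv ℝ u (proj45 r) (proj45 (Pi.single i 1)) := by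
  have hd : HasFDerivAt (fun r => u (proj45 r)) ((fderiv ℝ u (proj45 r)).comp proj45L) r :=
    hu.hasFDerivAt.comp r proj45L.hasFDerivAt
  rw [pd5, hd.fderiv]
  rfl

lemma pd5_castSucc_comp_proj45 (hu : DifferentiableAt ℝ u (proj45 r)) (i : Fin 4) :
    pd5 i.castSucc (fun r => u (proj45 r)) r = pd4 i u (proj45 r) := by
  rw [pd5_comp_proj45 hu, proj45_single_castSucc, pd4]

lemma pd5_last_comp_proj45 (hu : DifferentiableAt ℝ u (proj45 r)) :
    pd5 (Fin.last 4) (fun r => u (proj45 r)) r = 0 := by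
  rw [pd5_comp_proj45 hu, proj45_single_last, map_zero]

end Lift

section LaxPair

def laxF (u : (Fin 4 → ℝ) → ℝ) (r : Fin 5 → ℝ) : ℝ := r 4 ^ 2 + u (proj45 r)

noncomputable def laxG (u v : (Fin 4 → ℝ) → ℝ) (r : Fin 5 → ℝ) : ℝ :=
  r 4 ^ 3 + (3 / 2 : ℝ) * u (proj45 r) * r 4 + v (proj45 r)

variable {u v : (Fin 4 → ℝ) → ℝ} (r : Fin 5 → ℝ)

lemma pd5_castSucc_laxF (hu : Differentiable ℝ u) (i : Fin 4) :
    pd5 i.castSucc (laxF u) r = pd4 i u (proj45 r) := by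
  unfold laxF
  rw [pd5_add _ (by fun_prop) (by fun_prop), pd5_pow _ (by fun_prop), pd5_castSucc_apply_last,
    pd5_castSucc_comp_proj45 (hu _), mul_zero, zero_add]

lemma pd5_last_laxF (hu : Differentiable ℝ u) : pd5 (Fin.last 4) (laxF u) r = 2 * r 4 := by
  unfold laxF
  rw [pd5_add _ (by fun_prop) (by fun_prop), pd5_pow _ (by fun_prop), pd5_last_apply_last,
    pd5_last_comp_proj45 (hu _)]
  norm_num

lemma pd5_castSucc_laxG (hu : Differentiable ℝ u) (hv : Differentiable ℝ v) (i : Fin 4) :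
    pd5 i.castSucc (laxG u v) r = 3 / 2 * pd4 i u (proj45 r) * r 4 + pd4 i v (proj45 r) := by
  unfold laxG
  rw [pd5_add _ (by fun_prop) (by fun_prop), pd5_add _ (by fun_prop) (by fun_prop),
    pd5_pow _ (by fun_prop), pd5_mul _ (by fun_prop) (by fun_prop), pd5_const_mul _ (by fun_prop),
    pd5_castSucc_apply_last, pd5_castSucc_comp_proj45 (hu _), pd5_castSucc_comp_proj45 (hv _)]
  ring

lemma pd5_last_laxG (hu : Differentiable ℝ u) (hv : Differentiable ℝ v) :
    pd5 (Fin.last 4) (laxG u v) r = 3 * r 4 ^ 2 + 3 / 2 * u (proj45 r) := by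
  unfold laxG
  rw [pd5_add _ (by fun_prop) (by fun_prop), pd5_add _ (by fun_prop) (by fun_prop),
    pd5_pow _ (by fun_prop), pd5_mul _ (by fun_prop) (by fun_prop), pd5_const_mul _ (by fun_prop),
    pd5_last_apply_last, pd5_last_comp_proj45 (hu _), pd5_last_comp_proj45 (hv _)]
  ring

lemma laxPair_zeroCurvature_eq_cubic (hu : Differentiable ℝ u) (hv : Differentiable ℝ v) :
    pd5 3 (laxF u) r - pd5 1 (laxG u v) r + cbr5 (laxF u) (laxG u v) r
      = pd4 2 u (proj45 r) / 2 * r 4 ^ 3 + -pd4 2 v (proj45 r) * r 4 ^ 2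
        + (2 * pd4 0 v (proj45 r) - 3 / 2 * pd4 1 u (proj45 r)
            + 3 / 2 * u (proj45 r) * pd4 2 u (proj45 r)) * r 4
        + (pd4 3 u (proj45 r) - pd4 1 v (proj45 r) - 3 / 2 * u (proj45 r) * pd4 0 u (proj45 r)
            + u (proj45 r) * pd4 2 v (proj45 r) - v (proj45 r) * pd4 2 u (proj45 r)) := by
  rw [cbr5, show (0 : Fin 5) = (0 : Fin 4).castSucc from rfl,
    show (1 : Fin 5) = (1 : Fin 4).castSucc from rfl,
    show (2 : Fin 5) = (2 : Fin 4).castSucc from rfl,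
    show (3 : Fin 5) = (3 : Fin 4).castSucc from rfl, show (4 : Fin 5) = Fin.last 4 from rfl]
  simp only [pd5_castSucc_laxF r hu, pd5_last_laxF r hu, pd5_castSucc_laxG r hu hv,
    pd5_last_laxG r hu hv]
  simp only [laxF, laxG, show Fin.last 4 = 4 from rfl]
  ring

end LaxPair

lemma cubic_coeffs_eq_zero {a b c d : ℝ} (h : ∀ p : ℝ, a * p ^ 3 + b * p ^ 2 + c * p + d = 0) :
    a = 0 ∧ b = 0 ∧ c = 0 ∧ d = 0 := by
  have h₀ := h 0
  have h₁ := h 1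
  have h₂ := h (-1)
  have h₃ := h 2
  norm_num at h₀ h₁ h₂ h₃
  exact ⟨by linarith, by linarith, by linarith, by linarith⟩

/-- Promoting the dKP nonlinear Lax pair to a contact Lax pair forces
z-independence: for C¹ `u, v : ℝ⁴ → ℝ` of `(x,y,z,t)` and `f = p² + u`,
`g = p³ + (3/2) u p + v`, the equation `∂_t f − ∂_y g + {f,g}_L = 0` holds for all
`(x,y,z,t,p) ∈ ℝ⁵` iff at every `(x,y,z,t)`: `u_z = 0`, `v_z = 0`, `4 v_x = 3 u_y`
and `2 u_t = 3 u u_x + 2 v_y`. -/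
theorem dkp_contact_promotion_forces_z_independence (u v : (Fin 4 → ℝ) → ℝ)
    (hu : ContDiff ℝ 1 u) (hv : ContDiff ℝ 1 v)
    (f g : (Fin 5 → ℝ) → ℝ)
    (hf : f = fun r => (r 4) ^ 2 + u (proj45 r))
    (hg : g = fun r => (r 4) ^ 3 + (3 / 2 : ℝ) * u (proj45 r) * r 4 + v (proj45 r)) :
    (∀ r : Fin 5 → ℝ, pd5 3 f r - pd5 1 g r + cbr5 f g r = 0) ↔
    (∀ s : Fin 4 → ℝ,
      pd4 2 u s = 0 ∧ pd4 2 v s = 0 ∧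
      4 * pd4 0 v s = 3 * pd4 1 u s ∧
      2 * pd4 3 u s = 3 * u s * pd4 0 u s + 2 * pd4 1 v s) := by
  obtain rfl : f = laxF u := hf
  obtain rfl : g = laxG u v := hg
  have hcubic := fun r => laxPair_zeroCurvature_eq_cubic r (hu.differentiable one_ne_zero)
    (hv.differentiable one_ne_zero)
  constructor
  · intro h s
    obtain ⟨hu₃, hv₂, hc, hd⟩ := cubic_coeffs_eq_zero fun p => by
      have hp := h (Fin.snoc s p)
      rwa [hcubic, proj45_snoc, show (4 : Fin 5) = Fin.last 4 from rfl, Fin.snoc_last] at hp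
    have huz : pd4 2 u s = 0 := by linarith
    have hvz : pd4 2 v s = 0 := by linarith
    refine ⟨huz, hvz, ?_, ?_⟩
    · linear_combination 2 * hc - 3 * u s * huz
    · linear_combination 2 * hd - 2 * u s * hvz + 2 * v s * huz
  · intro h r
    obtain ⟨huz, hvz, hx, ht⟩ := h (proj45 r)
    rw [hcubic]
    linear_combination (r 4 ^ 3 / 2 + 3 / 2 * u (proj45 r) * r 4 - v (proj45 r)) * huz
      + (u (proj45 r) - r 4 ^ 2) * hvz + r 4 / 2 * hx + ht / 2
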